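/- For all a, b > 0 and all λ ≥ 0, ∫₀^∞ (exp(−x·f_b(λ)) − exp(−x·e^b/(e^b − 1))) ν_a(dx) = ∫₀^∞ e^{−λy} ν_{a+b}(dy); i.e., transporting the entrance rule ν_a by the transition kernel P_b of the diffusion (whose action on exponentials is P_b(e^{−λ·})(x) = e^{−x f_b(λ)}) and restricting to (0,∞) gives ν_{a+b}, expressed in Laplace-transform form (the subtracted term e^{−x·e^b/(e^b−1)} accounts for the atom at 0). -/

import Mathlib

/-!
The Laplace transform of `ν_a` is `c ↦ f_a(∞) - f_a(c)`, where `f_a(∞) = e^a / (e^a - 1)`.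
The maps `f_a` form a semigroup of Möbius transformations, `f_a ∘ f_b = f_{a+b}`, also at `∞`,
so the left-hand side is
`(f_a(∞) - f_a(f_b λ)) - (f_a(∞) - f_a(f_b ∞)) = f_{a+b}(∞) - f_{a+b}(λ)`.
-/

open MeasureTheory

/-- The homographic family `f_a(x) = x e^a / (1 + x (e^a - 1))`. -/
noncomputable def f (a x : ℝ) : ℝ := x * Real.exp a / (1 + x * (Real.exp a - 1))

/-- The measure `ν_a` on `(0, ∞)` with density
`y ↦ e^a (e^a - 1)⁻² e^(-y/(e^a - 1))` with respect to Lebesgue measure. -/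
noncomputable def nu (a : ℝ) : Measure ℝ :=
  (volume.restrict (Set.Ioi (0 : ℝ))).withDensity fun y =>
    ENNReal.ofReal (Real.exp a / (Real.exp a - 1) ^ 2 * Real.exp (-y / (Real.exp a - 1)))

open Real Set

/-- The limit of `f a x` as `x → ∞`. -/
noncomputable def fAtTop (a : ℝ) : ℝ := exp a / (exp a - 1)

lemma exp_sub_one_ne_zero {a : ℝ} (ha : a ≠ 0) : exp a - 1 ≠ 0 :=
  sub_ne_zero.2 ((exp_eq_one_iff a).not.2 ha)

lemma exp_sub_one_pos {a : ℝ} (ha : 0 < a) : 0 < exp a - 1 :=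
  sub_pos.2 (one_lt_exp_iff.2 ha)

lemma one_add_mul_exp_sub_one_pos {a c : ℝ} (ha : 0 ≤ a) (hc : 0 ≤ c) :
    0 < 1 + c * (exp a - 1) := by
  have : 0 ≤ exp a - 1 := sub_nonneg.2 (one_le_exp ha)
  positivity

lemma f_nonneg {a x : ℝ} (ha : 0 ≤ a) (hx : 0 ≤ x) : 0 ≤ f a x :=
  div_nonneg (by positivity) (one_add_mul_exp_sub_one_pos ha hx).le

lemma fAtTop_pos {a : ℝ} (ha : 0 < a) : 0 < fAtTop a :=
  div_pos (exp_pos a) (exp_sub_one_pos ha)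

lemma f_f (a : ℝ) {b x : ℝ} (hx : 1 + x * (exp b - 1) ≠ 0) : f a (f b x) = f (a + b) x := by
  unfold f
  rw [exp_add]
  field_simp
  ring_nf

lemma f_fAtTop (a : ℝ) {b : ℝ} (hb : b ≠ 0) : f a (fAtTop b) = fAtTop (a + b) := by
  have := exp_sub_one_ne_zero hb
  unfold f fAtTop
  rw [exp_add]
  field_simp
  ring_nf

lemma fAtTop_sub_f {a : ℝ} (ha : a ≠ 0) (c : ℝ) (hc : 1 + c * (exp a - 1) ≠ 0) :
    fAtTop a - f a c = exp a / ((exp a - 1) * (1 + c * (exp a - 1))) := by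
  unfold f fAtTop
  rw [div_sub_div _ _ (exp_sub_one_ne_zero ha) hc]
  congr 1
  ring

lemma integral_nu (a : ℝ) (g : ℝ → ℝ) :
    ∫ y, g y ∂nu a = ∫ y in Ioi 0, exp a / (exp a - 1) ^ 2 * exp (-y / (exp a - 1)) * g y := by
  rw [nu, integral_withDensity_eq_integral_toReal_smul (by fun_prop)
    (ae_of_all _ fun _ => ENNReal.ofReal_lt_top)]
  congr 1 with y
  rw [ENNReal.toReal_ofReal (by positivity), smul_eq_mul]

lemma integrable_nu_iff (a : ℝ) (g : ℝ → ℝ) :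
    Integrable g (nu a) ↔
      IntegrableOn (fun y => exp a / (exp a - 1) ^ 2 * exp (-y / (exp a - 1)) * g y) (Ioi 0) := by
  rw [nu, integrable_withDensity_iff_integrable_smul' (by fun_prop)
    (ae_of_all _ fun _ => ENNReal.ofReal_lt_top), IntegrableOn]
  refine integrable_congr (ae_of_all _ fun y => ?_)
  dsimp only
  rw [ENNReal.toReal_ofReal (by positivity), smul_eq_mul]

lemma nu_density_mul_exp_neg_mul {a : ℝ} (ha : a ≠ 0) (c y : ℝ) :
    exp a / (exp a - 1) ^ 2 * exp (-y / (exp a - 1)) * exp (-y * c) =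
      exp a / (exp a - 1) ^ 2 * exp (-(1 + c * (exp a - 1)) / (exp a - 1) * y) := by
  have := exp_sub_one_ne_zero ha
  rw [mul_assoc, ← exp_add]
  congr 2
  field_simp
  ring

lemma neg_one_add_mul_exp_sub_one_div_neg {a c : ℝ} (ha : 0 < a) (hc : 0 ≤ c) :
    -(1 + c * (exp a - 1)) / (exp a - 1) < 0 :=
  div_neg_of_neg_of_pos (neg_neg_of_pos (one_add_mul_exp_sub_one_pos ha.le hc))
    (exp_sub_one_pos ha)

lemma integrable_exp_neg_mul_nu {a c : ℝ} (ha : 0 < a) (hc : 0 ≤ c) :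
    Integrable (fun x => exp (-x * c)) (nu a) := by
  rw [integrable_nu_iff]
  simp_rw [nu_density_mul_exp_neg_mul ha.ne' c]
  exact (integrableOn_exp_mul_Ioi (neg_one_add_mul_exp_sub_one_div_neg ha hc) 0).const_mul _

lemma integral_exp_neg_mul_nu {a c : ℝ} (ha : 0 < a) (hc : 0 ≤ c) :
    ∫ x, exp (-x * c) ∂nu a = fAtTop a - f a c := by
  have hA := exp_sub_one_ne_zero ha.ne'
  have hD := (one_add_mul_exp_sub_one_pos ha.le hc).ne'
  rw [integral_nu]
  simp_rw [nu_density_mul_exp_neg_mul ha.ne' c]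
  rw [integral_const_mul, integral_exp_mul_Ioi (neg_one_add_mul_exp_sub_one_div_neg ha hc),
    mul_zero, exp_zero, fAtTop_sub_f ha.ne' c hD]
  field_simp

/-- For `a, b > 0` and `λ ≥ 0`,
`∫₀^∞ (exp (-x f_b(λ)) - exp (-x e^b/(e^b - 1))) ν_a(dx) = ∫₀^∞ e^(-λ y) ν_{a+b}(dy)`:
transporting the entrance rule `ν_a` by the transition kernel `P_b` of the diffusion (whose
action on exponentials is `P_b(e^{-λ·})(x) = e^{-x f_b(λ)}`) and restricting to `(0, ∞)`
gives `ν_{a+b}`, in Laplace-transform form (the subtracted term accounts for the atom at 0). -/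
theorem entrance_rule_f (a b : ℝ) (ha : 0 < a) (hb : 0 < b) (l : ℝ) (hl : 0 ≤ l) :
    ∫ x, (Real.exp (-x * f b l) - Real.exp (-x * (Real.exp b / (Real.exp b - 1)))) ∂(nu a) =
      ∫ y, Real.exp (-l * y) ∂(nu (a + b)) := by
  have hfl : 0 ≤ f b l := f_nonneg hb.le hl
  have hfb : 0 ≤ fAtTop b := (fAtTop_pos hb).le
  rw [← fAtTop, integral_sub (integrable_exp_neg_mul_nu ha hfl) (integrable_exp_neg_mul_nu ha hfb),
    integral_exp_neg_mul_nu ha hfl, integral_exp_neg_mul_nu ha hfb,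
    show (fun y => exp (-l * y)) = fun y => exp (-y * l) by ext; ring_nf,
    integral_exp_neg_mul_nu (add_pos ha hb) hl, f_f a (one_add_mul_exp_sub_one_pos hb.le hl).ne',
    f_fAtTop a hb.ne']
  ring
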